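/- arXiv:2308.04927 — 2 statements merged into one kernel-verified Lean document; each statement's English description precedes it below -/
import Mathlib

section
/- For a conformal vector field V on a Riemannian n-manifold (M,g) with associated skew-symmetric tensor Φ, the identity div(Φ(V)) + ⟨div Φ, V⟩ = −|Φ|² holds. -/
open scoped RealInnerProductSpace

/-- For a conformal vector field `V` on a Riemannian `n`-manifold `(M,g)`
with associated skew-symmetric tensor `Φ` (`⟨Φ(X),Y⟩ = ½ dV♭(X,Y)`), the identity
`div(Φ(V)) + ⟨div Φ, V⟩ = −|Φ|²` holds.

Vector fields are modelled as maps `M → E` with `E` an `n`-dimensional real inner product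
space (the metric being `g(X,Y)(p) = ⟪X p, Y p⟫`); `e` is a global orthonormal frame,
divergences are the corresponding traces of covariant derivatives, and
`|Φ|²(p) = tr(Φ(p)* ∘ Φ(p))` is the squared pointwise (Hilbert–Schmidt) norm of `Φ`. -/
theorem conformal_field_div_Phi_identity
    {M E : Type} [NormedAddCommGroup E] [InnerProductSpace ℝ E] [FiniteDimensional ℝ E]
    (n : ℕ)
    (conn bracket : (M → E) → (M → E) → (M → E))
    (D : (M → E) → (M → ℝ) → (M → ℝ))
    (V : M → E) (ψ : M → ℝ) (Φ : M → (E →ₗ[ℝ] E))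
    -- a global orthonormal frame
    (e : Fin n → (M → E))
    (hframe : ∀ (p : M) (x : E), x = ∑ i, ⟪x, e i p⟫ • e i p)
    -- the Levi-Civita connection is torsion-free
    (htf : ∀ X Y : M → E, conn X Y - conn Y X = bracket X Y)
    -- and metric compatible
    (hcompat : ∀ X Y Z : M → E, ∀ p : M,
      D X (fun q => ⟪Y q, Z q⟫) p = ⟪conn X Y p, Z p⟫ + ⟪Y p, conn X Z p⟫)
    -- V is conformal with conformal factor ψ : (ℒ_V g)(X,Y) = 2 ψ g(X,Y)
    (hconf : ∀ X Y : M → E, ∀ p : M,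
      D V (fun q => ⟪X q, Y q⟫) p - ⟪bracket V X p, Y p⟫ - ⟪X p, bracket V Y p⟫
        = 2 * ψ p * ⟪X p, Y p⟫)
    -- Φ is skew-symmetric
    (hskew : ∀ p : M, ∀ x y : E, ⟪Φ p x, y⟫ = - ⟪x, Φ p y⟫)
    -- and satisfies ⟨Φ(X), Y⟩ = ½ dη(X,Y) with η = V♭
    (hΦ : ∀ X Y : M → E, ∀ p : M,
      ⟪Φ p (X p), Y p⟫ = (1/2) * (D X (fun q => ⟪V q, Y q⟫) p
        - D Y (fun q => ⟪V q, X q⟫) p - ⟪V p, bracket X Y p⟫))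
    -- divergence of a vector field
    (divVF : (M → E) → (M → ℝ))
    (hdivVF : ∀ (X : M → E) (p : M), divVF X p = ∑ i, ⟪conn (e i) X p, e i p⟫)
    -- divergence of the (1,1)-tensor Φ, as a vector field
    (divΦ : M → E)
    (hdivΦ : ∀ p : M, divΦ p =
      ∑ i, (conn (e i) (fun q => Φ q (e i q)) p - Φ p (conn (e i) (e i) p))) :
    ∀ p : M, divVF (fun q => Φ q (V q)) p + ⟪divΦ p, V p⟫
      = - LinearMap.trace ℝ E (LinearMap.adjoint (Φ p) ∘ₗ Φ p) := by
  intro p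
  -- Notation-free abbreviations are avoided; we work with explicit `have`s.
  -- Step 1: conn of a pointwise-negated field is the negation.
  have star : ∀ (X Y Y' Z Z' : M → E), (∀ q, Y' q = -(Y q)) → (∀ q, Z' q = -(Z q)) →
      ∀ r : M, ⟪conn X Y' r, Z r⟫ - ⟪Y r, conn X Z r⟫
        = -⟪conn X Y r, Z r⟫ + ⟪Y r, conn X Z' r⟫ := by
    intro X Y Y' Z Z' hY hZ r
    have h1 : D X (fun q => ⟪Y' q, Z q⟫) r = ⟪conn X Y' r, Z r⟫ + ⟪Y' r, conn X Z r⟫ :=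
      hcompat X Y' Z r
    have h2 : D X (fun q => ⟪Y q, Z' q⟫) r = ⟪conn X Y r, Z' r⟫ + ⟪Y r, conn X Z' r⟫ :=
      hcompat X Y Z' r
    have hfun : (fun q => ⟪Y' q, Z q⟫) = (fun q => ⟪Y q, Z' q⟫) := by
      funext q; rw [hY q, hZ q, inner_neg_left, inner_neg_right]
    rw [hfun] at h1
    rw [hY r, inner_neg_left] at h1
    rw [hZ r, inner_neg_right] at h2
    linarith
  have negconn : ∀ (X Z Z' : M → E), (∀ q, Z' q = -(Z q)) → ∀ r : M,
      conn X Z' r = - conn X Z r := by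
    intro X Z Z' hZ r
    have key : ∀ (W : M → E), ⟪conn X Z' r, W r⟫ = -⟪conn X Z r, W r⟫ := by
      intro W
      have hW : ∀ q, (fun q => -(W q)) q = -(W q) := fun q => rfl
      have s1 := star X Z Z' W (fun q => -(W q)) hZ hW r
      have s2 := star X Z' Z W (fun q => -(W q)) (fun q => by rw [hZ q, neg_neg]) hW r
      rw [hZ r] at s2
      simp only [inner_neg_left] at s2
      linarith
    rw [hframe r (conn X Z' r), hframe r (- conn X Z r)]
    refine Finset.sum_congr rfl fun i _ => ?_
    rw [key (e i), inner_neg_left]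
  -- Step 2: conformality + torsion-free + compatibility give the symmetrized identity.
  have LA : ∀ (X Y : M → E) (r : M),
      ⟪conn X V r, Y r⟫ + ⟪conn Y V r, X r⟫ = 2 * ψ r * ⟪X r, Y r⟫ := by
    intro X Y r
    have h := hconf X Y r
    have hD : D V (fun q => ⟪X q, Y q⟫) r = ⟪conn V X r, Y r⟫ + ⟪X r, conn V Y r⟫ :=
      hcompat V X Y r
    have hbX : bracket V X r = conn V X r - conn X V r := (congrFun (htf V X) r).symm
    have hbY : bracket V Y r = conn V Y r - conn Y V r := (congrFun (htf V Y) r).symm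
    rw [hD, hbX, hbY, inner_sub_left, inner_sub_right] at h
    have hc1 : ⟪X r, conn Y V r⟫ = ⟪conn Y V r, X r⟫ := real_inner_comm _ _
    linarith
  -- Step 3: the defining identity of Φ simplifies.
  have LB : ∀ (X Y : M → E) (r : M),
      ⟪Φ r (X r), Y r⟫ = (1/2) * (⟪conn X V r, Y r⟫ - ⟪conn Y V r, X r⟫) := by
    intro X Y r
    have h := hΦ X Y r
    have hD1 : D X (fun q => ⟪V q, Y q⟫) r = ⟪conn X V r, Y r⟫ + ⟪V r, conn X Y r⟫ :=
      hcompat X V Y r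
    have hD2 : D Y (fun q => ⟪V q, X q⟫) r = ⟪conn Y V r, X r⟫ + ⟪V r, conn Y X r⟫ :=
      hcompat Y V X r
    have hb : bracket X Y r = conn X Y r - conn Y X r := (congrFun (htf X Y) r).symm
    rw [hD1, hD2, hb, inner_sub_right] at h
    linarith
  -- Step 4: ∇_X V = ψ X + Φ X.
  have LC : ∀ (X : M → E) (r : M), conn X V r = ψ r • X r + Φ r (X r) := by
    intro X r
    have hin : ∀ (Y : M → E), ⟪conn X V r, Y r⟫ = ψ r * ⟪X r, Y r⟫ + ⟪Φ r (X r), Y r⟫ := by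
      intro Y
      have h1 := LA X Y r
      have h2 := LB X Y r
      linarith
    rw [hframe r (conn X V r), hframe r (ψ r • X r + Φ r (X r))]
    refine Finset.sum_congr rfl fun i _ => ?_
    rw [hin (e i), inner_add_left, real_inner_smul_left]
  -- Step 5: trace formula from the frame identity.
  have htr : LinearMap.trace ℝ E (LinearMap.adjoint (Φ p) ∘ₗ Φ p)
      = ∑ i, ⟪Φ p (e i p), Φ p (e i p)⟫ := by
    set T : E →ₗ[ℝ] E := LinearMap.adjoint (Φ p) ∘ₗ Φ p with hT
    have hrep : T = ∑ i, LinearMap.smulRight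
        ((innerSL ℝ (e i p)).toLinearMap) (T (e i p)) := by
      apply LinearMap.ext; intro x
      conv_lhs => rw [hframe p x]
      rw [map_sum, LinearMap.sum_apply]
      refine Finset.sum_congr rfl fun i _ => ?_
      rw [map_smul, LinearMap.smulRight_apply]
      simp [real_inner_comm]
    have hro : ∀ (f : Module.Dual ℝ E) (v : E),
        LinearMap.trace ℝ E (LinearMap.smulRight f v) = f v := by
      intro f v
      have : LinearMap.smulRight f v = dualTensorHom ℝ E E (f ⊗ₜ v) := by
        apply LinearMap.ext; intro x
        rw [dualTensorHom_apply, LinearMap.smulRight_apply]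
      rw [this, LinearMap.trace_eq_contract_apply, contractLeft_apply]
    rw [hrep, map_sum]
    refine Finset.sum_congr rfl fun i _ => ?_
    rw [hro]
    have : T (e i p) = LinearMap.adjoint (Φ p) (Φ p (e i p)) := rfl
    simp only [ContinuousLinearMap.coe_coe, innerSL_apply_apply, this]
    rw [LinearMap.adjoint_inner_right]
  -- Step 6: the per-index computation.
  have key : ∀ i : Fin n, ⟪conn (e i) (fun q => Φ q (V q)) p, e i p⟫
      = -⟪conn (e i) (fun q => Φ q (e i q)) p, V p⟫ - ⟪Φ p (e i p), Φ p (e i p)⟫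
        - ⟪Φ p (V p), conn (e i) (e i) p⟫ := by
    intro i
    have h1 : D (e i) (fun q => ⟪Φ q (V q), e i q⟫) p
        = ⟪conn (e i) (fun q => Φ q (V q)) p, e i p⟫ + ⟪Φ p (V p), conn (e i) (e i) p⟫ :=
      hcompat (e i) (fun q => Φ q (V q)) (e i) p
    have h2 : D (e i) (fun q => ⟪-(Φ q (e i q)), V q⟫) p
        = ⟪conn (e i) (fun q => -(Φ q (e i q))) p, V p⟫
          + ⟪-(Φ p (e i p)), conn (e i) V p⟫ :=
      hcompat (e i) (fun q => -(Φ q (e i q))) V p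
    have hfe : (fun q => ⟪Φ q (V q), e i q⟫) = (fun q => ⟪-(Φ q (e i q)), V q⟫) := by
      funext q
      rw [inner_neg_left, hskew q (e i q) (V q), neg_neg, real_inner_comm]
    rw [hfe] at h1
    have hneg : conn (e i) (fun q => -(Φ q (e i q))) p
        = - conn (e i) (fun q => Φ q (e i q)) p :=
      negconn (e i) (fun q => Φ q (e i q)) (fun q => -(Φ q (e i q))) (fun q => rfl) p
    rw [hneg, LC (e i) p, inner_neg_left, inner_neg_left, inner_add_right,
      real_inner_smul_right] at h2
    have hze : ⟪Φ p (e i p), e i p⟫ = 0 := by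
      have h := hskew p (e i p) (e i p)
      have hc : ⟪e i p, Φ p (e i p)⟫ = ⟪Φ p (e i p), e i p⟫ := real_inner_comm _ _
      linarith
    rw [h1] at h2
    rw [hze, mul_zero] at h2
    linarith
  -- Step 7: assemble.
  rw [hdivVF (fun q => Φ q (V q)) p, hdivΦ p, sum_inner, htr, ← Finset.sum_add_distrib,
    ← Finset.sum_neg_distrib]
  refine Finset.sum_congr rfl fun i _ => ?_
  rw [inner_sub_left]
  have hk := key i
  have hs : ⟪Φ p (V p), conn (e i) (e i) p⟫ = -⟪V p, Φ p (conn (e i) (e i) p)⟫ :=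
    hskew p (V p) (conn (e i) (e i) p)
  have hc : ⟪V p, Φ p (conn (e i) (e i) p)⟫ = ⟪Φ p (conn (e i) (e i) p), V p⟫ :=
    real_inner_comm _ _
  linarith
end

section
/- Let (M,g,f) be a vacuum static space with constant scalar curvature s, satisfying Ddf = −(s/(n−1)) f g + f Ric, and let V be a closed conformal vector field with conformal factor ψ. Then ∇(V(f)) = ψ∇f − (n−1) f ∇ψ − (s/(n−1)) f V. -/
open scoped RealInnerProductSpace

/-- Let `(M,g,f)` be a vacuum static space with constant scalar
curvature `s`, satisfying `Ddf = −(s/(n−1)) f g + f Ric` (equivalently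
`∇_X∇f = −(s/(n−1)) f X + f Q X` with `Q` the Ricci operator), and let `V` be a
closed conformal vector field with conformal factor `ψ` (so `∇_X V = ψX` and
`QV = (1−n)∇ψ`). Then `∇(V(f)) = ψ∇f − (n−1) f ∇ψ − (s/(n−1)) f V`.

Vector fields are modelled as maps `M → E`, the metric being `g(X,Y)(p) = ⟪X p, Y p⟫`;
`conn` is the Levi-Civita connection, `D X f = X(f)` and `grad` the gradient. -/
theorem vacuum_static_grad_Vf
    {M E : Type} [NormedAddCommGroup E] [InnerProductSpace ℝ E]
    (n : ℕ) (hn2 : 2 ≤ n)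
    (conn : (M → E) → (M → E) → (M → E))
    (D : (M → E) → (M → ℝ) → (M → ℝ))
    (grad : (M → ℝ) → (M → E))
    (V : M → E) (ψ f : M → ℝ) (s : ℝ) (Q : M → (E →ₗ[ℝ] E))
    -- the gradient is dual to the differential
    (hgrad : ∀ (h : M → ℝ) (X : M → E) (p : M), ⟪grad h p, X p⟫ = D X h p)
    -- the connection is metric compatible
    (hcompat : ∀ X Y Z : M → E, ∀ p : M,
      D X (fun q => ⟪Y q, Z q⟫) p = ⟪conn X Y p, Z p⟫ + ⟪Y p, conn X Z p⟫)
    -- the Ricci operator is symmetric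
    (hQsym : ∀ (p : M) (x y : E), ⟪Q p x, y⟫ = ⟪x, Q p y⟫)
    -- the vacuum static equation: ∇_X∇f = −(s/(n−1)) f X + f Q X
    (hstatic : ∀ (X : M → E) (p : M),
      conn X (grad f) p = (-(s / ((n : ℝ) - 1)) * f p) • X p + f p • Q p (X p))
    -- V is a closed conformal vector field with conformal factor ψ
    (hcc : ∀ (X : M → E) (p : M), conn X V p = ψ p • X p)
    -- QV = (1−n)∇ψ
    (hQV : ∀ p : M, Q p (V p) = ((1 : ℝ) - n) • grad ψ p) :
    ∀ p : M, grad (fun q => ⟪V q, grad f q⟫) p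
      = ψ p • grad f p - (((n : ℝ) - 1) * f p) • grad ψ p
        - ((s / ((n : ℝ) - 1)) * f p) • V p := by
  intro p
  apply ext_inner_right ℝ
  intro e
  have h1 := hgrad (fun q => ⟪V q, grad f q⟫) (fun _ => e) p
  have h2 := hcompat (fun _ => e) V (grad f) p
  rw [h1, h2, hcc, hstatic]
  have hψ := hgrad ψ (fun _ => e) p
  have hf := hgrad f (fun _ => e) p
  have hQ : ⟪V p, Q p e⟫ = ((1:ℝ) - n) * ⟪grad ψ p, e⟫ := by
    rw [← hQsym, hQV, real_inner_smul_left]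
  simp only [inner_add_right, inner_smul_right, real_inner_smul_left, inner_sub_left,
    inner_smul_left, hQ, RCLike.star_def, conj_trivial, real_inner_comm e (grad f p)]
  ring
end
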